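/- arXiv:1211.2830 — 2 statements merged into one kernel-verified Lean document; each statement's English description precedes it below -/
import Mathlib

section
/- Let a₁,a₂,a₃,a₄ and b_{ij} (for 1 ≤ i < j ≤ 6) be real numbers. Set p = 2a₁+a₃, q = 2a₂+a₄, r = a₁−a₃, s = a₂−a₄ and α = −2(rp + sq). On the 6-dimensional real vector space with basis X₁,…,X₆ define a bilinear skew-symmetric bracket by [X₆,X₁]=X₂, [X₆,X₂]=−X₁, [X₆,X₃]=−X₄, [X₆,X₄]=X₃, [X₁,X₅]=−p·X₃−q·X₄, [X₂,X₅]=−q·X₃+p·X₄, [X₃,X₅]=p·X₁+q·X₂, [X₄,X₅]=q·X₁−p·X₂, [X₁,X₃]=2r·X₅, [X₂,X₄]=−2r·X₅, [X₁,X₄]=2s·X₅, [X₂,X₃]=2s·X₅, [X₁,X₂]=0, [X₃,X₄]=0, [X₅,X₆]=0, and then adding the term −b_{ij}·X₆ to [X_i,X_j] for every pair 1 ≤ i < j ≤ 6. Then this bracket satisfies the Jacobi identity (i.e., defines a Lie algebra) if and only if a₁a₄ = a₂a₃, b₁₂ = α, b₃₄ = −α, and b_{ij} = 0 for all other pairs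 i < j. -/
/-- The skew-symmetric bilinear bracket on `ℝ⁶` determined by the structure equations (★)
of Puhle's paper, with `[Xᵢ, Xⱼ]` additionally containing the term `−bᵢⱼ • X₆` for `i < j`.
Coordinates are 0-based: `X₁,…,X₆` correspond to indices `0,…,5`. -/
def puhleBracket (a₁ a₂ a₃ a₄ : ℝ) (b : Fin 6 → Fin 6 → ℝ)
    (x y : Fin 6 → ℝ) : Fin 6 → ℝ :=
  let p := 2 * a₁ + a₃
  let q := 2 * a₂ + a₄
  let r := a₁ - a₃
  let s := a₂ - a₄
  let w : Fin 6 → Fin 6 → ℝ := fun i j => x i * y j - x j * y i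
  ![p * w 2 4 + q * w 3 4 + w 1 5,
    q * w 2 4 - p * w 3 4 - w 0 5,
    -(p * w 0 4) - q * w 1 4 - w 3 5,
    -(q * w 0 4) + p * w 1 4 + w 2 5,
    2 * r * (w 0 2 - w 1 3) + 2 * s * (w 0 3 + w 1 2),
    -(b 0 1 * w 0 1 + b 0 2 * w 0 2 + b 0 3 * w 0 3 + b 0 4 * w 0 4 + b 0 5 * w 0 5
      + b 1 2 * w 1 2 + b 1 3 * w 1 3 + b 1 4 * w 1 4 + b 1 5 * w 1 5
      + b 2 3 * w 2 3 + b 2 4 * w 2 4 + b 2 5 * w 2 5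
      + b 3 4 * w 3 4 + b 3 5 * w 3 5 + b 4 5 * w 4 5)]


private lemma pjw0 (a₁ a₂ a₃ a₄ : ℝ) (b : Fin 6 → Fin 6 → ℝ) (x y : Fin 6 → ℝ) :
    puhleBracket a₁ a₂ a₃ a₄ b x y 0 =
    (2*a₁+a₃) * (x 2 * y 4 - x 4 * y 2) + (2*a₂+a₄) * (x 3 * y 4 - x 4 * y 3)
      + (x 1 * y 5 - x 5 * y 1) := rfl
private lemma pjw1 (a₁ a₂ a₃ a₄ : ℝ) (b : Fin 6 → Fin 6 → ℝ) (x y : Fin 6 → ℝ) :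
    puhleBracket a₁ a₂ a₃ a₄ b x y 1 =
    (2*a₂+a₄) * (x 2 * y 4 - x 4 * y 2) - (2*a₁+a₃) * (x 3 * y 4 - x 4 * y 3)
      - (x 0 * y 5 - x 5 * y 0) := rfl
private lemma pjw2 (a₁ a₂ a₃ a₄ : ℝ) (b : Fin 6 → Fin 6 → ℝ) (x y : Fin 6 → ℝ) :
    puhleBracket a₁ a₂ a₃ a₄ b x y 2 =
    -((2*a₁+a₃) * (x 0 * y 4 - x 4 * y 0)) - (2*a₂+a₄) * (x 1 * y 4 - x 4 * y 1)
      - (x 3 * y 5 - x 5 * y 3) := rfl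
private lemma pjw3 (a₁ a₂ a₃ a₄ : ℝ) (b : Fin 6 → Fin 6 → ℝ) (x y : Fin 6 → ℝ) :
    puhleBracket a₁ a₂ a₃ a₄ b x y 3 =
    -((2*a₂+a₄) * (x 0 * y 4 - x 4 * y 0)) + (2*a₁+a₃) * (x 1 * y 4 - x 4 * y 1)
      + (x 2 * y 5 - x 5 * y 2) := rfl
private lemma pjw4 (a₁ a₂ a₃ a₄ : ℝ) (b : Fin 6 → Fin 6 → ℝ) (x y : Fin 6 → ℝ) :
    puhleBracket a₁ a₂ a₃ a₄ b x y 4 =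
    2 * (a₁-a₃) * ((x 0 * y 2 - x 2 * y 0) - (x 1 * y 3 - x 3 * y 1))
      + 2 * (a₂-a₄) * ((x 0 * y 3 - x 3 * y 0) + (x 1 * y 2 - x 2 * y 1)) := rfl
private lemma pjw5 (a₁ a₂ a₃ a₄ : ℝ) (b : Fin 6 → Fin 6 → ℝ) (x y : Fin 6 → ℝ) :
    puhleBracket a₁ a₂ a₃ a₄ b x y 5 =
    -(b 0 1 * (x 0 * y 1 - x 1 * y 0) + b 0 2 * (x 0 * y 2 - x 2 * y 0)
      + b 0 3 * (x 0 * y 3 - x 3 * y 0) + b 0 4 * (x 0 * y 4 - x 4 * y 0)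
      + b 0 5 * (x 0 * y 5 - x 5 * y 0)
      + b 1 2 * (x 1 * y 2 - x 2 * y 1) + b 1 3 * (x 1 * y 3 - x 3 * y 1)
      + b 1 4 * (x 1 * y 4 - x 4 * y 1) + b 1 5 * (x 1 * y 5 - x 5 * y 1)
      + b 2 3 * (x 2 * y 3 - x 3 * y 2) + b 2 4 * (x 2 * y 4 - x 4 * y 2)
      + b 2 5 * (x 2 * y 5 - x 5 * y 2)
      + b 3 4 * (x 3 * y 4 - x 4 * y 3) + b 3 5 * (x 3 * y 5 - x 5 * y 3)
      + b 4 5 * (x 4 * y 5 - x 5 * y 4)) := rfl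
private lemma pv0 (c0 c1 c2 c3 c4 c5 : ℝ) : ![c0,c1,c2,c3,c4,c5] 0 = c0 := rfl
private lemma pv1 (c0 c1 c2 c3 c4 c5 : ℝ) : ![c0,c1,c2,c3,c4,c5] 1 = c1 := rfl
private lemma pv2 (c0 c1 c2 c3 c4 c5 : ℝ) : ![c0,c1,c2,c3,c4,c5] 2 = c2 := rfl
private lemma pv3 (c0 c1 c2 c3 c4 c5 : ℝ) : ![c0,c1,c2,c3,c4,c5] 3 = c3 := rfl
private lemma pv4 (c0 c1 c2 c3 c4 c5 : ℝ) : ![c0,c1,c2,c3,c4,c5] 4 = c4 := rfl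
private lemma pv5 (c0 c1 c2 c3 c4 c5 : ℝ) : ![c0,c1,c2,c3,c4,c5] 5 = c5 := rfl

set_option maxHeartbeats 1000000 in
/-- The bracket above satisfies the Jacobi identity (hence defines a Lie algebra) if and only
if `a₁a₄ = a₂a₃`, `b₁₂ = α`, `b₃₄ = −α` and all remaining `bᵢⱼ` (for `i < j`) vanish, where
`α = −2((a₁−a₃)(2a₁+a₃) + (a₂−a₄)(2a₂+a₄))`. -/
theorem jacobi_iff (a₁ a₂ a₃ a₄ : ℝ) (b : Fin 6 → Fin 6 → ℝ) :
    (∀ x y z : Fin 6 → ℝ,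
        puhleBracket a₁ a₂ a₃ a₄ b (puhleBracket a₁ a₂ a₃ a₄ b x y) z
          + puhleBracket a₁ a₂ a₃ a₄ b (puhleBracket a₁ a₂ a₃ a₄ b y z) x
          + puhleBracket a₁ a₂ a₃ a₄ b (puhleBracket a₁ a₂ a₃ a₄ b z x) y = 0)
      ↔ (a₁ * a₄ = a₂ * a₃
          ∧ b 0 1 = -2 * ((a₁ - a₃) * (2 * a₁ + a₃) + (a₂ - a₄) * (2 * a₂ + a₄))
          ∧ b 2 3 = 2 * ((a₁ - a₃) * (2 * a₁ + a₃) + (a₂ - a₄) * (2 * a₂ + a₄))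
          ∧ ∀ i j : Fin 6, i < j → ¬(i = 0 ∧ j = 1) → ¬(i = 2 ∧ j = 3) → b i j = 0) := by
  constructor
  · intro H
    have ea := congrFun (H ![1,0,0,0,0,0] ![0,1,0,0,0,0] ![0,0,1,0,0,0]) 2
    simp only [Pi.add_apply, Pi.zero_apply, pjw0, pjw1, pjw2, pjw3, pjw4, pjw5, pv0, pv1, pv2, pv3, pv4, pv5] at ea
    have ha : a₁ * a₄ = a₂ * a₃ := by linear_combination (-1/6 : ℝ) * ea
    have e01 := congrFun (H ![1,0,0,0,0,0] ![0,1,0,0,0,0] ![0,0,1,0,0,0]) 3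
    simp only [Pi.add_apply, Pi.zero_apply, pjw0, pjw1, pjw2, pjw3, pjw4, pjw5, pv0, pv1, pv2, pv3, pv4, pv5] at e01
    have hb01 : b 0 1 = -2 * ((a₁ - a₃) * (2 * a₁ + a₃) + (a₂ - a₄) * (2 * a₂ + a₄)) := by linear_combination e01
    have e23 := congrFun (H ![1,0,0,0,0,0] ![0,0,1,0,0,0] ![0,0,0,1,0,0]) 1
    simp only [Pi.add_apply, Pi.zero_apply, pjw0, pjw1, pjw2, pjw3, pjw4, pjw5, pv0, pv1, pv2, pv3, pv4, pv5] at e23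
    have hb23 : b 2 3 = 2 * ((a₁ - a₃) * (2 * a₁ + a₃) + (a₂ - a₄) * (2 * a₂ + a₄)) := by linear_combination -e23
    have e02 := congrFun (H ![1,0,0,0,0,0] ![0,1,0,0,0,0] ![0,0,1,0,0,0]) 0
    simp only [Pi.add_apply, Pi.zero_apply, pjw0, pjw1, pjw2, pjw3, pjw4, pjw5, pv0, pv1, pv2, pv3, pv4, pv5] at e02
    have hb02 : b 0 2 = 0 := by linear_combination -e02
    have e12 := congrFun (H ![1,0,0,0,0,0] ![0,1,0,0,0,0] ![0,0,1,0,0,0]) 1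
    simp only [Pi.add_apply, Pi.zero_apply, pjw0, pjw1, pjw2, pjw3, pjw4, pjw5, pv0, pv1, pv2, pv3, pv4, pv5] at e12
    have hb12 : b 1 2 = 0 := by linear_combination -e12
    have e03 := congrFun (H ![1,0,0,0,0,0] ![0,1,0,0,0,0] ![0,0,0,1,0,0]) 0
    simp only [Pi.add_apply, Pi.zero_apply, pjw0, pjw1, pjw2, pjw3, pjw4, pjw5, pv0, pv1, pv2, pv3, pv4, pv5] at e03
    have hb03 : b 0 3 = 0 := by linear_combination -e03
    have e13 := congrFun (H ![1,0,0,0,0,0] ![0,1,0,0,0,0] ![0,0,0,1,0,0]) 1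
    simp only [Pi.add_apply, Pi.zero_apply, pjw0, pjw1, pjw2, pjw3, pjw4, pjw5, pv0, pv1, pv2, pv3, pv4, pv5] at e13
    have hb13 : b 1 3 = 0 := by linear_combination -e13
    have e04 := congrFun (H ![1,0,0,0,0,0] ![0,1,0,0,0,0] ![0,0,0,0,1,0]) 0
    simp only [Pi.add_apply, Pi.zero_apply, pjw0, pjw1, pjw2, pjw3, pjw4, pjw5, pv0, pv1, pv2, pv3, pv4, pv5] at e04
    have hb04 : b 0 4 = 0 := by linear_combination -e04
    have e14 := congrFun (H ![1,0,0,0,0,0] ![0,1,0,0,0,0] ![0,0,0,0,1,0]) 1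
    simp only [Pi.add_apply, Pi.zero_apply, pjw0, pjw1, pjw2, pjw3, pjw4, pjw5, pv0, pv1, pv2, pv3, pv4, pv5] at e14
    have hb14 : b 1 4 = 0 := by linear_combination -e14
    have e05 := congrFun (H ![1,0,0,0,0,0] ![0,1,0,0,0,0] ![0,0,0,0,0,1]) 0
    simp only [Pi.add_apply, Pi.zero_apply, pjw0, pjw1, pjw2, pjw3, pjw4, pjw5, pv0, pv1, pv2, pv3, pv4, pv5] at e05
    have hb05 : b 0 5 = 0 := by linear_combination -e05
    have e15 := congrFun (H ![1,0,0,0,0,0] ![0,1,0,0,0,0] ![0,0,0,0,0,1]) 1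
    simp only [Pi.add_apply, Pi.zero_apply, pjw0, pjw1, pjw2, pjw3, pjw4, pjw5, pv0, pv1, pv2, pv3, pv4, pv5] at e15
    have hb15 : b 1 5 = 0 := by linear_combination -e15
    have e24 := congrFun (H ![1,0,0,0,0,0] ![0,0,1,0,0,0] ![0,0,0,0,1,0]) 1
    simp only [Pi.add_apply, Pi.zero_apply, pjw0, pjw1, pjw2, pjw3, pjw4, pjw5, pv0, pv1, pv2, pv3, pv4, pv5] at e24
    have hb24 : b 2 4 = 0 := by linear_combination -e24
    have e25 := congrFun (H ![1,0,0,0,0,0] ![0,0,1,0,0,0] ![0,0,0,0,0,1]) 1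
    simp only [Pi.add_apply, Pi.zero_apply, pjw0, pjw1, pjw2, pjw3, pjw4, pjw5, pv0, pv1, pv2, pv3, pv4, pv5] at e25
    have hb25 : b 2 5 = 0 := by linear_combination -e25
    have e34 := congrFun (H ![1,0,0,0,0,0] ![0,0,0,1,0,0] ![0,0,0,0,1,0]) 1
    simp only [Pi.add_apply, Pi.zero_apply, pjw0, pjw1, pjw2, pjw3, pjw4, pjw5, pv0, pv1, pv2, pv3, pv4, pv5] at e34
    have hb34 : b 3 4 = 0 := by linear_combination -e34
    have e35 := congrFun (H ![1,0,0,0,0,0] ![0,0,0,1,0,0] ![0,0,0,0,0,1]) 1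
    simp only [Pi.add_apply, Pi.zero_apply, pjw0, pjw1, pjw2, pjw3, pjw4, pjw5, pv0, pv1, pv2, pv3, pv4, pv5] at e35
    have hb35 : b 3 5 = 0 := by linear_combination -e35
    have e45 := congrFun (H ![1,0,0,0,0,0] ![0,0,0,0,1,0] ![0,0,0,0,0,1]) 1
    simp only [Pi.add_apply, Pi.zero_apply, pjw0, pjw1, pjw2, pjw3, pjw4, pjw5, pv0, pv1, pv2, pv3, pv4, pv5] at e45
    have hb45 : b 4 5 = 0 := by linear_combination -e45
    refine ⟨ha, hb01, hb23, ?_⟩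
    intro i j hij h1 h2
    fin_cases i <;> fin_cases j <;>
      first
        | exact absurd hij (by decide)
        | exact absurd (by decide) h1
        | exact absurd (by decide) h2
        | exact hb02
        | exact hb03
        | exact hb04
        | exact hb05
        | exact hb12
        | exact hb13
        | exact hb14
        | exact hb15
        | exact hb24
        | exact hb25
        | exact hb34
        | exact hb35
        | exact hb45
  · rintro ⟨ha, hb01, hb23, hb⟩
    have h02 : b 0 2 = 0 := hb 0 2 (by decide) (by decide) (by decide)
    have h03 : b 0 3 = 0 := hb 0 3 (by decide) (by decide) (by decide)
    have h04 : b 0 4 = 0 := hb 0 4 (by decide) (by decide) (by decide)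
    have h05 : b 0 5 = 0 := hb 0 5 (by decide) (by decide) (by decide)
    have h12 : b 1 2 = 0 := hb 1 2 (by decide) (by decide) (by decide)
    have h13 : b 1 3 = 0 := hb 1 3 (by decide) (by decide) (by decide)
    have h14 : b 1 4 = 0 := hb 1 4 (by decide) (by decide) (by decide)
    have h15 : b 1 5 = 0 := hb 1 5 (by decide) (by decide) (by decide)
    have h24 : b 2 4 = 0 := hb 2 4 (by decide) (by decide) (by decide)
    have h25 : b 2 5 = 0 := hb 2 5 (by decide) (by decide) (by decide)
    have h34 : b 3 4 = 0 := hb 3 4 (by decide) (by decide) (by decide)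
    have h35 : b 3 5 = 0 := hb 3 5 (by decide) (by decide) (by decide)
    have h45 : b 4 5 = 0 := hb 4 5 (by decide) (by decide) (by decide)
    intro x y z
    have J0 : (puhleBracket a₁ a₂ a₃ a₄ b (puhleBracket a₁ a₂ a₃ a₄ b x y) z
          + puhleBracket a₁ a₂ a₃ a₄ b (puhleBracket a₁ a₂ a₃ a₄ b y z) x
          + puhleBracket a₁ a₂ a₃ a₄ b (puhleBracket a₁ a₂ a₃ a₄ b z x) y) 0 = 0 := by
      simp only [Pi.add_apply, Pi.zero_apply, pjw0, pjw1, pjw2, pjw3, pjw4, pjw5, hb01, hb23, h02, h03, h04, h05, h12, h13, h14, h15, h24, h25, h34, h35, h45]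
      linear_combination (-6*(x 0*y 2*z 3 - x 0*y 3*z 2 - x 2*y 0*z 3 + x 2*y 3*z 0 + x 3*y 0*z 2 - x 3*y 2*z 0)) * ha
    have J1 : (puhleBracket a₁ a₂ a₃ a₄ b (puhleBracket a₁ a₂ a₃ a₄ b x y) z
          + puhleBracket a₁ a₂ a₃ a₄ b (puhleBracket a₁ a₂ a₃ a₄ b y z) x
          + puhleBracket a₁ a₂ a₃ a₄ b (puhleBracket a₁ a₂ a₃ a₄ b z x) y) 1 = 0 := by
      simp only [Pi.add_apply, Pi.zero_apply, pjw0, pjw1, pjw2, pjw3, pjw4, pjw5, hb01, hb23, h02, h03, h04, h05, h12, h13, h14, h15, h24, h25, h34, h35, h45]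
      linear_combination (-6*(x 1*y 2*z 3 - x 1*y 3*z 2 - x 2*y 1*z 3 + x 2*y 3*z 1 + x 3*y 1*z 2 - x 3*y 2*z 1)) * ha
    have J2 : (puhleBracket a₁ a₂ a₃ a₄ b (puhleBracket a₁ a₂ a₃ a₄ b x y) z
          + puhleBracket a₁ a₂ a₃ a₄ b (puhleBracket a₁ a₂ a₃ a₄ b y z) x
          + puhleBracket a₁ a₂ a₃ a₄ b (puhleBracket a₁ a₂ a₃ a₄ b z x) y) 2 = 0 := by
      simp only [Pi.add_apply, Pi.zero_apply, pjw0, pjw1, pjw2, pjw3, pjw4, pjw5, hb01, hb23, h02, h03, h04, h05, h12, h13, h14, h15, h24, h25, h34, h35, h45]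
      linear_combination (-6*(x 0*y 1*z 2 - x 0*y 2*z 1 - x 1*y 0*z 2 + x 1*y 2*z 0 + x 2*y 0*z 1 - x 2*y 1*z 0)) * ha
    have J3 : (puhleBracket a₁ a₂ a₃ a₄ b (puhleBracket a₁ a₂ a₃ a₄ b x y) z
          + puhleBracket a₁ a₂ a₃ a₄ b (puhleBracket a₁ a₂ a₃ a₄ b y z) x
          + puhleBracket a₁ a₂ a₃ a₄ b (puhleBracket a₁ a₂ a₃ a₄ b z x) y) 3 = 0 := by
      simp only [Pi.add_apply, Pi.zero_apply, pjw0, pjw1, pjw2, pjw3, pjw4, pjw5, hb01, hb23, h02, h03, h04, h05, h12, h13, h14, h15, h24, h25, h34, h35, h45]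
      linear_combination (-6*(x 0*y 1*z 3 - x 0*y 3*z 1 - x 1*y 0*z 3 + x 1*y 3*z 0 + x 3*y 0*z 1 - x 3*y 1*z 0)) * ha
    have J4 : (puhleBracket a₁ a₂ a₃ a₄ b (puhleBracket a₁ a₂ a₃ a₄ b x y) z
          + puhleBracket a₁ a₂ a₃ a₄ b (puhleBracket a₁ a₂ a₃ a₄ b y z) x
          + puhleBracket a₁ a₂ a₃ a₄ b (puhleBracket a₁ a₂ a₃ a₄ b z x) y) 4 = 0 := by
      simp only [Pi.add_apply, Pi.zero_apply, pjw0, pjw1, pjw2, pjw3, pjw4, pjw5, hb01, hb23, h02, h03, h04, h05, h12, h13, h14, h15, h24, h25, h34, h35, h45]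
      linear_combination (12*(x 0*y 1*z 4 - x 0*y 4*z 1 - x 1*y 0*z 4 + x 1*y 4*z 0 + x 2*y 3*z 4 - x 2*y 4*z 3 - x 3*y 2*z 4 + x 3*y 4*z 2 + x 4*y 0*z 1 - x 4*y 1*z 0 + x 4*y 2*z 3 - x 4*y 3*z 2)) * ha
    have J5 : (puhleBracket a₁ a₂ a₃ a₄ b (puhleBracket a₁ a₂ a₃ a₄ b x y) z
          + puhleBracket a₁ a₂ a₃ a₄ b (puhleBracket a₁ a₂ a₃ a₄ b y z) x
          + puhleBracket a₁ a₂ a₃ a₄ b (puhleBracket a₁ a₂ a₃ a₄ b z x) y) 5 = 0 := by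
      simp only [Pi.add_apply, Pi.zero_apply, pjw0, pjw1, pjw2, pjw3, pjw4, pjw5, hb01, hb23, h02, h03, h04, h05, h12, h13, h14, h15, h24, h25, h34, h35, h45]
      ring
    funext k
    fin_cases k
    · exact J0
    · exact J1
    · exact J2
    · exact J3
    · exact J4
    · exact J5
end

section
/- The 10-dimensional space Λ²V* of alternating bilinear forms on V is the internal direct sum of the following four subspaces, of dimensions 1, 2, 3 and 4 respectively: Λ²₁ = {t·Φ : t ∈ ℝ}; Λ²₂ = {β : β(ξ,X) = 0 for all X, and β(φ(X),φ(Y)) = −β(X,Y) for all X,Y}; Λ²₃ = {β : β(φ(X),φ(Y)) = β(X,Y) for all X,Y, and Σᵢ β(bᵢ,φ(bᵢ)) = 0 for every orthonormal basis (b₁,…,b₅) of V}; Λ²₄ = {β : β(X,Y) = 0 whenever η(X) = η(Y) = 0}. (This is the U(2)-decomposition Λ² = Λ²₁ ⊕ Λ²₂ ⊕ Λ²₃ ⊕ Λ²₄ with dim Λ²ᵢ = i, stated without the Hodge star via the equivalent φ-invariance characterizations.) -/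
open scoped RealInnerProductSpace

noncomputable section

variable {V : Type*} [NormedAddCommGroup V] [InnerProductSpace ℝ V]

/-- The fundamental 2-form `Φ(X,Y) = ⟪X, φ(Y)⟫` as a bilinear map. -/
def fundForm (φ : V →ₗ[ℝ] V) : V →ₗ[ℝ] V →ₗ[ℝ] ℝ :=
  LinearMap.mk₂ ℝ (fun X Y => ⟪X, φ Y⟫)
    (fun X X' Y => by simp [inner_add_left])
    (fun c X Y => by simp [real_inner_smul_left])
    (fun X Y Y' => by simp [inner_add_right])
    (fun c X Y => by simp [real_inner_smul_right])

/-- The space `Λ²V*` of alternating bilinear forms on `V`. -/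
def Lambda2 (V : Type*) [NormedAddCommGroup V] [InnerProductSpace ℝ V] :
    Submodule ℝ (V →ₗ[ℝ] V →ₗ[ℝ] ℝ) where
  carrier := {β | ∀ X Y : V, β X Y = -β Y X}
  add_mem' := by
    intro β γ hβ hγ X Y
    simp only [LinearMap.add_apply]
    rw [hβ X Y, hγ X Y]; ring
  zero_mem' := by intro X Y; simp
  smul_mem' := by
    intro c β hβ X Y
    simp only [LinearMap.smul_apply, smul_eq_mul]
    rw [hβ X Y]; ring

/-- `Λ²₁ = {t·Φ : t ∈ ℝ}`. -/
def Lambda2₁ (φ : V →ₗ[ℝ] V) : Submodule ℝ (V →ₗ[ℝ] V →ₗ[ℝ] ℝ) :=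
  Submodule.span ℝ {fundForm φ}

/-- `Λ²₂`: alternating forms with `β(ξ,·) = 0` and `β(φX,φY) = −β(X,Y)`. -/
def Lambda2₂ (ξ : V) (φ : V →ₗ[ℝ] V) : Submodule ℝ (V →ₗ[ℝ] V →ₗ[ℝ] ℝ) where
  carrier := {β | (∀ X Y : V, β X Y = -β Y X) ∧ (∀ X : V, β ξ X = 0)
    ∧ ∀ X Y : V, β (φ X) (φ Y) = -β X Y}
  add_mem' := by
    rintro β γ ⟨hβ1, hβ2, hβ3⟩ ⟨hγ1, hγ2, hγ3⟩
    refine ⟨fun X Y => ?_, fun X => ?_, fun X Y => ?_⟩ <;>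
      simp only [LinearMap.add_apply]
    · rw [hβ1 X Y, hγ1 X Y]; ring
    · rw [hβ2 X, hγ2 X]; ring
    · rw [hβ3 X Y, hγ3 X Y]; ring
  zero_mem' := ⟨fun X Y => by simp, fun X => by simp, fun X Y => by simp⟩
  smul_mem' := by
    rintro c β ⟨h1, h2, h3⟩
    refine ⟨fun X Y => ?_, fun X => ?_, fun X Y => ?_⟩ <;>
      simp only [LinearMap.smul_apply, smul_eq_mul]
    · rw [h1 X Y]; ring
    · rw [h2 X]; ring
    · rw [h3 X Y]; ring

/-- `Λ²₃`: alternating forms with `β(φX,φY) = β(X,Y)` and vanishing trace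
`Σᵢ β(bᵢ, φ(bᵢ)) = 0` for every orthonormal basis `b`. -/
def Lambda2₃ (φ : V →ₗ[ℝ] V) : Submodule ℝ (V →ₗ[ℝ] V →ₗ[ℝ] ℝ) where
  carrier := {β | (∀ X Y : V, β X Y = -β Y X)
    ∧ (∀ X Y : V, β (φ X) (φ Y) = β X Y)
    ∧ ∀ b : OrthonormalBasis (Fin 5) ℝ V, ∑ i, β (b i) (φ (b i)) = 0}
  add_mem' := by
    rintro β γ ⟨hβ1, hβ2, hβ3⟩ ⟨hγ1, hγ2, hγ3⟩
    refine ⟨fun X Y => ?_, fun X Y => ?_, fun b => ?_⟩ <;>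
      simp only [LinearMap.add_apply]
    · rw [hβ1 X Y, hγ1 X Y]; ring
    · rw [hβ2 X Y, hγ2 X Y]
    · rw [Finset.sum_add_distrib, hβ3 b, hγ3 b]; ring
  zero_mem' := ⟨fun X Y => by simp, fun X Y => by simp, fun b => by simp⟩
  smul_mem' := by
    rintro c β ⟨h1, h2, h3⟩
    refine ⟨fun X Y => ?_, fun X Y => ?_, fun b => ?_⟩ <;>
      simp only [LinearMap.smul_apply, smul_eq_mul]
    · rw [h1 X Y]; ring
    · rw [h2 X Y]
    · rw [← Finset.mul_sum, h3 b]; ring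

/-- `Λ²₄`: alternating forms vanishing on `ker η × ker η`, where `η(X) = ⟪X, ξ⟫`. -/
def Lambda2₄ (ξ : V) : Submodule ℝ (V →ₗ[ℝ] V →ₗ[ℝ] ℝ) where
  carrier := {β | (∀ X Y : V, β X Y = -β Y X)
    ∧ ∀ X Y : V, ⟪X, ξ⟫ = 0 → ⟪Y, ξ⟫ = 0 → β X Y = 0}
  add_mem' := by
    rintro β γ ⟨hβ1, hβ2⟩ ⟨hγ1, hγ2⟩
    refine ⟨fun X Y => ?_, fun X Y hX hY => ?_⟩ <;> simp only [LinearMap.add_apply]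
    · rw [hβ1 X Y, hγ1 X Y]; ring
    · rw [hβ2 X Y hX hY, hγ2 X Y hX hY]; ring
  zero_mem' := ⟨fun X Y => by simp, fun X Y _ _ => by simp⟩
  smul_mem' := by
    rintro c β ⟨h1, h2⟩
    refine ⟨fun X Y => ?_, fun X Y hX hY => ?_⟩ <;>
      simp only [LinearMap.smul_apply, smul_eq_mul]
    · rw [h1 X Y]; ring
    · rw [h2 X Y hX hY]; ring

end

/-!
The sum map `Λ²₁ × Λ²₂ × Λ²₃ × Λ²₄ → Λ²` is injective: evaluating at `ξ` kills the `Λ²₄`-part, the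
`φ`-trace `β ↦ Σᵢ β(bᵢ, φ bᵢ)`, which is `-4` on `Φ` and vanishes on `Λ²₂` and `Λ²₃`, kills the
`Λ²₁`-part, and a form that is both `φ`-invariant and `φ`-anti-invariant is zero. As `dim Λ² ≤ 10`,
it remains to bound the four dimensions from below by `1, 2, 3, 4`. Pick a unit vector `e ⊥ ξ`.
The linear maps `y ↦ ξ ∧ y`, `y ↦ e ∧ y - φe ∧ φy` and `y ↦ e ∧ y + φe ∧ φy + ⟪φe, y⟫ Φ` send
`ξ^⊥`, `{ξ, e, φe}^⊥` and `{ξ, e}^⊥` into `Λ²₄`, `Λ²₂` and `Λ²₃` respectively (the multiple of `Φ`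
cancels the `φ`-trace `4⟪φe, y⟫`), and they are injective there because the image of `y` takes
the value `|y|²` at `(ξ, y)`, resp. `(e, y)`.
-/

open Module Submodule

section DirectSumOfFour

def IndepFour {R M : Type*} [Semiring R] [AddCommMonoid M] [Module R M]
    (L₁ L₂ L₃ L₄ : Submodule R M) : Prop :=
  ∀ x₁ ∈ L₁, ∀ x₂ ∈ L₂, ∀ x₃ ∈ L₃, ∀ x₄ ∈ L₄,
    x₁ + x₂ + x₃ + x₄ = 0 → x₁ = 0 ∧ x₂ = 0 ∧ x₃ = 0 ∧ x₄ = 0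

variable {K M : Type*} [Field K] [AddCommGroup M] [Module K M] {L L₁ L₂ L₃ L₄ : Submodule K M}

def addFour (L₁ L₂ L₃ L₄ : Submodule K M) : L₁ × L₂ × L₃ × L₄ →ₗ[K] M :=
  L₁.subtype.coprod (L₂.subtype.coprod (L₃.subtype.coprod L₄.subtype))

theorem addFour_apply (q : L₁ × L₂ × L₃ × L₄) :
    addFour L₁ L₂ L₃ L₄ q = q.1 + q.2.1 + q.2.2.1 + q.2.2.2 := by
  simp [addFour, add_assoc]

theorem range_addFour : LinearMap.range (addFour L₁ L₂ L₃ L₄) = L₁ ⊔ L₂ ⊔ L₃ ⊔ L₄ := by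
  simp [addFour, LinearMap.range_coprod, sup_assoc]

theorem addFour_injective (hind : IndepFour L₁ L₂ L₃ L₄) :
    Function.Injective (addFour L₁ L₂ L₃ L₄) := by
  refine (injective_iff_map_eq_zero _).2 fun q hq => ?_
  rw [addFour_apply] at hq
  obtain ⟨h₁, h₂, h₃, h₄⟩ := hind _ q.1.2 _ q.2.1.2 _ q.2.2.1.2 _ q.2.2.2.2 hq
  ext <;> assumption

theorem finrank_range_addFour [FiniteDimensional K M]
    (hinj : Function.Injective (addFour L₁ L₂ L₃ L₄)) :
    finrank K (LinearMap.range (addFour L₁ L₂ L₃ L₄)) =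
      finrank K L₁ + finrank K L₂ + finrank K L₃ + finrank K L₄ := by
  rw [LinearMap.finrank_range_of_inj hinj, finrank_prod, finrank_prod, finrank_prod]
  ring

theorem finrank_add_le_of_indepFour [FiniteDimensional K M] (hind : IndepFour L₁ L₂ L₃ L₄)
    (hle : L₁ ⊔ L₂ ⊔ L₃ ⊔ L₄ ≤ L) :
    finrank K L₁ + finrank K L₂ + finrank K L₃ + finrank K L₄ ≤ finrank K L := by
  rw [← finrank_range_addFour (addFour_injective hind)]
  exact Submodule.finrank_mono (by rwa [range_addFour])

theorem existsUnique_add_of_indepFour [FiniteDimensional K M] (hind : IndepFour L₁ L₂ L₃ L₄)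
    (hle : L₁ ⊔ L₂ ⊔ L₃ ⊔ L₄ ≤ L)
    (hdim : finrank K L ≤ finrank K L₁ + finrank K L₂ + finrank K L₃ + finrank K L₄) :
    ∀ x ∈ L, ∃! q : L₁ × L₂ × L₃ × L₄, x = ↑q.1 + ↑q.2.1 + ↑q.2.2.1 + ↑q.2.2.2 := by
  have hinj := addFour_injective hind
  have hrange : LinearMap.range (addFour L₁ L₂ L₃ L₄) = L :=
    Submodule.eq_of_le_of_finrank_le (by rwa [range_addFour])
      (by rwa [finrank_range_addFour hinj])
  intro x hx
  obtain ⟨q, rfl⟩ := LinearMap.mem_range.1 (hrange ▸ hx)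
  exact ⟨q, addFour_apply q, fun q' hq' => hinj (by rw [addFour_apply q', ← hq'])⟩

end DirectSumOfFour

section AlmostContactMetric

variable {V : Type*} [NormedAddCommGroup V] [InnerProductSpace ℝ V]

theorem finrank_sub_le_finrank_orthogonal_span [FiniteDimensional ℝ V] (s : Finset V) {k : ℕ}
    (hs : s.card ≤ k) : finrank ℝ V - k ≤ finrank ℝ (span ℝ (s : Set V))ᗮ := by
  have hsum := (span ℝ (s : Set V)).finrank_add_finrank_orthogonal
  have hspan : finrank ℝ (span ℝ (s : Set V)) ≤ s.card := finrank_span_finset_le_card s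
  omega

theorem exists_inner_self_eq_one_mem {K : Submodule ℝ V} (hK : 0 < finrank ℝ K) :
    ∃ e ∈ K, ⟪e, e⟫ = 1 := by
  have hK' : K ≠ ⊥ := by rintro rfl; simp at hK
  obtain ⟨v, hv, hv0⟩ := K.ne_bot_iff.1 hK'
  refine ⟨‖v‖⁻¹ • v, K.smul_mem _ hv, ?_⟩
  rw [real_inner_self_eq_norm_sq, norm_smul, norm_inv, norm_norm,
    inv_mul_cancel₀ (norm_ne_zero_iff.2 hv0), one_pow]

theorem exists_inner_self_eq_one_inner_eq_zero [FiniteDimensional ℝ V] (ξ : V)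
    (hV : 1 < finrank ℝ V) : ∃ e : V, ⟪e, e⟫ = 1 ∧ ⟪e, ξ⟫ = 0 := by
  have hK := finrank_sub_le_finrank_orthogonal_span {ξ} (Finset.card_singleton ξ).le
  rw [Finset.coe_singleton] at hK
  obtain ⟨e, he, he1⟩ := exists_inner_self_eq_one_mem (K := (ℝ ∙ ξ)ᗮ) (by omega)
  exact ⟨e, he1, inner_left_of_mem_orthogonal (mem_span_singleton_self ξ) he⟩

theorem finrank_le_finrank_of_apply_self [FiniteDimensional ℝ V] {W : Submodule ℝ V}
    {L : Submodule ℝ (V →ₗ[ℝ] V →ₗ[ℝ] ℝ)} (F : V →ₗ[ℝ] V →ₗ[ℝ] V →ₗ[ℝ] ℝ) (x₀ : V)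
    (hFL : ∀ y ∈ W, F y ∈ L) (hF : ∀ y ∈ W, F y x₀ y = ⟪y, y⟫) :
    finrank ℝ W ≤ finrank ℝ L := by
  let G : W →ₗ[ℝ] L := (F.domRestrict W).codRestrict L fun y => hFL y y.2
  refine G.finrank_le_finrank_of_injective ((injective_iff_map_eq_zero G).2 fun y hy => ?_)
  have hFy : F y = 0 := congrArg Subtype.val hy
  have hyy := hF y y.2
  rw [hFy, LinearMap.zero_apply, LinearMap.zero_apply, eq_comm, inner_self_eq_zero] at hyy
  exact Subtype.ext hyy

theorem finrank_lambda2_le {ι : Type*} [Fintype ι] [LinearOrder ι] (b : Basis ι ℝ V) :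
    finrank ℝ (Lambda2 V) ≤ Fintype.card {p : ι × ι // p.1 < p.2} := by
  let f : Lambda2 V →ₗ[ℝ] {p : ι × ι // p.1 < p.2} → ℝ :=
    { toFun := fun β p => β.1 (b p.1.1) (b p.1.2)
      map_add' := fun _ _ => rfl
      map_smul' := fun _ _ => rfl }
  rw [← Module.finrank_fintype_fun_eq_card ℝ]
  refine f.finrank_le_finrank_of_injective fun β γ hβγ => ?_
  have hlt : ∀ i j, i < j → β.1 (b i) (b j) = γ.1 (b i) (b j) :=
    fun i j hij => congrFun hβγ ⟨(i, j), hij⟩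
  refine Subtype.ext (LinearMap.ext_basis b b fun i j => ?_)
  rcases lt_trichotomy i j with hij | rfl | hij
  · exact hlt i j hij
  · linarith [β.2 (b i) (b i), γ.2 (b i) (b i)]
  · rw [β.2, γ.2 (b i), hlt j i hij]

def wedge (x : V) : V →ₗ[ℝ] V →ₗ[ℝ] V →ₗ[ℝ] ℝ where
  toFun y := LinearMap.mk₂ ℝ (fun X Y => ⟪X, x⟫ * ⟪Y, y⟫ - ⟪X, y⟫ * ⟪Y, x⟫)
    (fun _ _ _ => by simp only [inner_add_left]; ring)
    (fun _ _ _ => by simp only [real_inner_smul_left, smul_eq_mul]; ring)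
    (fun _ _ _ => by simp only [inner_add_left]; ring)
    (fun _ _ _ => by simp only [real_inner_smul_left, smul_eq_mul]; ring)
  map_add' _ _ := by
    ext; simp only [LinearMap.mk₂_apply, LinearMap.add_apply, inner_add_right]; ring
  map_smul' _ _ := by
    ext; simp only [LinearMap.mk₂_apply, LinearMap.smul_apply, real_inner_smul_right,
      RingHom.id_apply, smul_eq_mul]; ring

@[simp]
theorem wedge_apply (x y X Y : V) : wedge x y X Y = ⟪X, x⟫ * ⟪Y, y⟫ - ⟪X, y⟫ * ⟪Y, x⟫ := rfl

noncomputable def phiTrace {ι : Type*} [Fintype ι] (φ : V →ₗ[ℝ] V)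
    (b : OrthonormalBasis ι ℝ V) : (V →ₗ[ℝ] V →ₗ[ℝ] ℝ) →ₗ[ℝ] ℝ where
  toFun β := ∑ i, β (b i) (φ (b i))
  map_add' _ _ := Finset.sum_add_distrib
  map_smul' _ _ := (Finset.mul_sum ..).symm

theorem phiTrace_apply {ι : Type*} [Fintype ι] (φ : V →ₗ[ℝ] V) (b : OrthonormalBasis ι ℝ V)
    (β : V →ₗ[ℝ] V →ₗ[ℝ] ℝ) : phiTrace φ b β = ∑ i, β (b i) (φ (b i)) := rfl

theorem wedge_mem_lambda2₄ (ξ y : V) : wedge ξ y ∈ Lambda2₄ ξ :=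
  ⟨fun X Y => by simp only [wedge_apply]; ring,
    fun X Y hX hY => by simp only [wedge_apply, hX, hY]; ring⟩

theorem finrank_sub_one_le_finrank_lambda2₄ [FiniteDimensional ℝ V] {ξ : V}
    (hξ : ⟪ξ, ξ⟫ = 1) : finrank ℝ V - 1 ≤ finrank ℝ (Lambda2₄ ξ) := by
  refine (finrank_sub_le_finrank_orthogonal_span {ξ} (Finset.card_singleton ξ).le).trans
    (finrank_le_finrank_of_apply_self (wedge ξ) ξ (fun y _ => wedge_mem_lambda2₄ ξ y)
      fun y hy => ?_)
  have hyξ : ⟪y, ξ⟫ = 0 := inner_left_of_mem_orthogonal (subset_span (by simp)) hy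
  rw [wedge_apply, hξ, hyξ, real_inner_comm y ξ, hyξ]
  ring

theorem eq_zero_of_mem_lambda2₄ {ξ : V} (hξ : ⟪ξ, ξ⟫ = 1) {β : V →ₗ[ℝ] V →ₗ[ℝ] ℝ}
    (hβ : β ∈ Lambda2₄ ξ) (hβξ : β ξ = 0) : β = 0 := by
  obtain ⟨halt, hhor⟩ := hβ
  have hhor' : ∀ Z, ⟪Z - ⟪Z, ξ⟫ • ξ, ξ⟫ = 0 := fun Z => by
    rw [inner_sub_left, real_inner_smul_left, hξ, mul_one, sub_self]
  ext X Y
  have hsplit : ∀ Z : V, Z = (Z - ⟪Z, ξ⟫ • ξ) + ⟪Z, ξ⟫ • ξ := fun Z => (sub_add_cancel _ _).symm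
  rw [hsplit X, hsplit Y]
  simp only [map_add, map_smul, LinearMap.add_apply, LinearMap.smul_apply, hβξ,
    hhor _ _ (hhor' X) (hhor' Y), halt _ ξ, LinearMap.zero_apply]
  simp

theorem apply_xi_eq_zero_of_mem_lambda2₃ {ξ : V} {φ : V →ₗ[ℝ] V} (hφξ : φ ξ = 0)
    {β : V →ₗ[ℝ] V →ₗ[ℝ] ℝ} (hβ : β ∈ Lambda2₃ φ) : β ξ = 0 := by
  ext X
  rw [← hβ.2.1, hφξ, map_zero, LinearMap.zero_apply, LinearMap.zero_apply]

theorem disjoint_lambda2₂_lambda2₃ (ξ : V) (φ : V →ₗ[ℝ] V) :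
    Disjoint (Lambda2₂ ξ φ) (Lambda2₃ φ) := by
  refine Submodule.disjoint_def.2 fun β h₂ h₃ => ?_
  ext X Y
  rw [LinearMap.zero_apply, LinearMap.zero_apply]
  linarith [h₂.2.2 X Y, h₃.2.1 X Y]

structure IsAlmostContactMetric (ξ : V) (φ : V →ₗ[ℝ] V) : Prop where
  inner_self_xi : ⟪ξ, ξ⟫ = 1
  map_xi : φ ξ = 0
  map_map : ∀ X, φ (φ X) = -X + ⟪X, ξ⟫ • ξ
  inner_map_map : ∀ X Y, ⟪φ X, φ Y⟫ = ⟪X, Y⟫ - ⟪X, ξ⟫ * ⟪Y, ξ⟫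

namespace IsAlmostContactMetric

variable {ξ : V} {φ : V →ₗ[ℝ] V} {ι : Type*} [Fintype ι] {e : V}

theorem inner_map_xi (h : IsAlmostContactMetric ξ φ) (X : V) : ⟪φ X, ξ⟫ = 0 := by
  have h3 := h.map_map (φ X)
  rw [h.map_map X, map_add, map_neg, map_smul, h.map_xi, smul_zero, add_zero,
    left_eq_add] at h3
  have hξ : ξ ≠ 0 := by rintro rfl; simpa using h.inner_self_xi
  exact (smul_eq_zero.1 h3).resolve_right hξ

theorem inner_map_left (h : IsAlmostContactMetric ξ φ) (X Y : V) : ⟪φ X, Y⟫ = -⟪X, φ Y⟫ := by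
  have h1 := h.inner_map_map X (φ Y)
  rw [h.map_map, inner_add_right, inner_neg_right, real_inner_smul_right, h.inner_map_xi,
    h.inner_map_xi] at h1
  linarith

theorem inner_map_self (h : IsAlmostContactMetric ξ φ) (X : V) : ⟪X, φ X⟫ = 0 := by
  linarith [h.inner_map_left X X, real_inner_comm X (φ X)]

theorem inner_map_map_of_horizontal (h : IsAlmostContactMetric ξ φ) {X : V} (hX : ⟪X, ξ⟫ = 0)
    (Y : V) : ⟪φ X, φ Y⟫ = ⟪X, Y⟫ := by
  rw [h.inner_map_map, hX, zero_mul, sub_zero]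

theorem fundForm_xi (h : IsAlmostContactMetric ξ φ) (X : V) : fundForm φ ξ X = 0 := by
  rw [fundForm, LinearMap.mk₂_apply, real_inner_comm, h.inner_map_xi]

theorem fundForm_map_map (h : IsAlmostContactMetric ξ φ) (X Y : V) :
    fundForm φ (φ X) (φ Y) = fundForm φ X Y := by
  simp only [fundForm, LinearMap.mk₂_apply, h.inner_map_map, h.inner_map_xi, mul_zero, sub_zero]

theorem fundForm_mem_lambda2 (h : IsAlmostContactMetric ξ φ) : fundForm φ ∈ Lambda2 V := by
  intro X Y
  rw [fundForm, LinearMap.mk₂_apply, LinearMap.mk₂_apply, ← h.inner_map_left, real_inner_comm]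

theorem phiTrace_fundForm (h : IsAlmostContactMetric ξ φ) (b : OrthonormalBasis ι ℝ V) :
    phiTrace φ b (fundForm φ) = 1 - Fintype.card ι := by
  have hterm : ∀ i, fundForm φ (b i) (φ (b i)) = ⟪ξ, b i⟫ * ⟪b i, ξ⟫ - 1 := by
    intro i
    rw [fundForm, LinearMap.mk₂_apply, h.map_map, inner_add_right, inner_neg_right,
      real_inner_smul_right, b.inner_eq_one, real_inner_comm ξ]
    ring
  rw [phiTrace_apply, Finset.sum_congr rfl fun i _ => hterm i, Finset.sum_sub_distrib,
    b.sum_inner_mul_inner, h.inner_self_xi, Finset.sum_const, Finset.card_univ, nsmul_one]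

theorem phiTrace_wedge (h : IsAlmostContactMetric ξ φ) (b : OrthonormalBasis ι ℝ V) (x y : V) :
    phiTrace φ b (wedge x y) = 2 * ⟪φ x, y⟫ := by
  have hterm : ∀ i, wedge x y (b i) (φ (b i)) = ⟪y, b i⟫ * ⟪b i, φ x⟫ - ⟪x, b i⟫ * ⟪b i, φ y⟫ := by
    intro i
    rw [wedge_apply, h.inner_map_left, h.inner_map_left, real_inner_comm x, real_inner_comm y]
    ring
  rw [phiTrace_apply, Finset.sum_congr rfl fun i _ => hterm i, Finset.sum_sub_distrib,
    b.sum_inner_mul_inner, b.sum_inner_mul_inner]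
  linarith [h.inner_map_left x y, real_inner_comm (φ x) y]

theorem wedge_apply_map_map (h : IsAlmostContactMetric ξ φ) (x y X Y : V) :
    wedge x y (φ X) (φ Y) = wedge (φ x) (φ y) X Y := by
  simp only [wedge_apply, h.inner_map_left]
  ring

theorem wedge_map_map_apply_map_map (h : IsAlmostContactMetric ξ φ) {x y : V}
    (hx : ⟪x, ξ⟫ = 0) (hy : ⟪y, ξ⟫ = 0) (X Y : V) :
    wedge (φ x) (φ y) (φ X) (φ Y) = wedge x y X Y := by
  simp only [wedge_apply, h.inner_map_map, hx, hy, mul_zero, sub_zero]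

theorem wedge_sub_wedge_map_mem_lambda2₂ (h : IsAlmostContactMetric ξ φ) {x y : V}
    (hx : ⟪x, ξ⟫ = 0) (hy : ⟪y, ξ⟫ = 0) : wedge x y - wedge (φ x) (φ y) ∈ Lambda2₂ ξ φ := by
  refine ⟨fun X Y => ?_, fun X => ?_, fun X Y => ?_⟩ <;> simp only [LinearMap.sub_apply]
  · simp only [wedge_apply]; ring
  · simp only [wedge_apply, real_inner_comm _ ξ, hx, hy, h.inner_map_xi]; ring
  · rw [h.wedge_apply_map_map, h.wedge_map_map_apply_map_map hx hy]; ring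

theorem wedge_add_wedge_map_add_smul_fundForm_mem_lambda2₃ (h : IsAlmostContactMetric ξ φ)
    {x y : V} (hx : ⟪x, ξ⟫ = 0) (hy : ⟪y, ξ⟫ = 0) :
    wedge x y + wedge (φ x) (φ y) + ⟪φ x, y⟫ • fundForm φ ∈ Lambda2₃ φ := by
  refine ⟨fun X Y => ?_, fun X Y => ?_, fun b => ?_⟩
  · simp only [LinearMap.add_apply, LinearMap.smul_apply, smul_eq_mul, wedge_apply,
      h.fundForm_mem_lambda2 X Y]
    ring
  · simp only [LinearMap.add_apply, LinearMap.smul_apply, h.wedge_map_map_apply_map_map hx hy]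
    rw [h.wedge_apply_map_map, h.fundForm_map_map]
    ring
  · rw [← phiTrace_apply, map_add, map_add, map_smul, h.phiTrace_wedge, h.phiTrace_wedge,
      h.phiTrace_fundForm, h.inner_map_map_of_horizontal (h.inner_map_xi x)]
    simp only [Fintype.card_fin, smul_eq_mul]
    ring

theorem apply_map_self_eq_zero_of_mem_lambda2₂ (h : IsAlmostContactMetric ξ φ)
    {β : V →ₗ[ℝ] V →ₗ[ℝ] ℝ} (hβ : β ∈ Lambda2₂ ξ φ) (X : V) : β X (φ X) = 0 := by
  obtain ⟨halt, hξβ, hanti⟩ := hβ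
  have := hanti X (φ X)
  rw [h.map_map, map_add, map_neg, map_smul, halt (φ X) ξ, hξβ, neg_zero, smul_zero, add_zero,
    halt (φ X)] at this
  linarith

theorem phiTrace_eq_zero_of_mem_lambda2₂ (h : IsAlmostContactMetric ξ φ)
    (b : OrthonormalBasis ι ℝ V) {β : V →ₗ[ℝ] V →ₗ[ℝ] ℝ}
    (hβ : β ∈ Lambda2₂ ξ φ) : phiTrace φ b β = 0 :=
  Finset.sum_eq_zero fun i _ => h.apply_map_self_eq_zero_of_mem_lambda2₂ hβ (b i)

theorem sup_le_lambda2 (h : IsAlmostContactMetric ξ φ) :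
    Lambda2₁ φ ⊔ Lambda2₂ ξ φ ⊔ Lambda2₃ φ ⊔ Lambda2₄ ξ ≤ Lambda2 V :=
  sup_le (sup_le (sup_le (span_le.2 (Set.singleton_subset_iff.2 h.fundForm_mem_lambda2))
    fun _ hβ => hβ.1) fun _ hβ => hβ.1) fun _ hβ => hβ.1

theorem indepFour_lambda2 (h : IsAlmostContactMetric ξ φ) (b : OrthonormalBasis (Fin 5) ℝ V) :
    IndepFour (Lambda2₁ φ) (Lambda2₂ ξ φ) (Lambda2₃ φ) (Lambda2₄ ξ) := by
  intro β₁ h₁ β₂ h₂ β₃ h₃ β₄ h₄ hsum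
  obtain ⟨t, rfl⟩ := mem_span_singleton.1 h₁
  have hβ₄ : β₄ = 0 := by
    refine eq_zero_of_mem_lambda2₄ h.inner_self_xi h₄ (LinearMap.ext fun X => ?_)
    have hX := congrArg (fun β : V →ₗ[ℝ] V →ₗ[ℝ] ℝ => β ξ X) hsum
    simpa [h.fundForm_xi, h₂.2.1, apply_xi_eq_zero_of_mem_lambda2₃ h.map_xi h₃] using hX
  have ht : t = 0 := by
    have htr := congrArg (phiTrace φ b) hsum
    rw [map_add, map_add, map_add, map_smul, h.phiTrace_fundForm,
      h.phiTrace_eq_zero_of_mem_lambda2₂ b h₂, phiTrace_apply φ b β₃, h₃.2.2 b, hβ₄] at htr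
    norm_num at htr
    exact htr
  rw [ht, zero_smul, zero_add, hβ₄, add_zero] at hsum
  have hβ₂ : β₂ = 0 := disjoint_def.1 (disjoint_lambda2₂_lambda2₃ ξ φ) β₂ h₂ <| by
    rw [eq_neg_of_add_eq_zero_left (G := V →ₗ[ℝ] V →ₗ[ℝ] ℝ) hsum]
    exact Submodule.neg_mem (M := V →ₗ[ℝ] V →ₗ[ℝ] ℝ) _ h₃
  rw [hβ₂, zero_add] at hsum
  exact ⟨by rw [ht, zero_smul], hβ₂, hsum, hβ₄⟩

theorem finrank_lambda2₁ (h : IsAlmostContactMetric ξ φ) (he : ⟪e, e⟫ = 1)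
    (heξ : ⟪e, ξ⟫ = 0) : finrank ℝ (Lambda2₁ φ) = 1 := by
  have hΦe : fundForm φ (φ e) e = 1 := by
    rw [fundForm, LinearMap.mk₂_apply, h.inner_map_map_of_horizontal heξ, he]
  have hΦ : fundForm φ ≠ 0 := fun hΦ => by
    rw [hΦ] at hΦe
    exact zero_ne_one hΦe
  exact finrank_span_singleton (K := ℝ) (V := V →ₗ[ℝ] V →ₗ[ℝ] ℝ) hΦ

theorem finrank_sub_three_le_finrank_lambda2₂ [FiniteDimensional ℝ V]
    (h : IsAlmostContactMetric ξ φ) (he : ⟪e, e⟫ = 1) (heξ : ⟪e, ξ⟫ = 0) :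
    finrank ℝ V - 3 ≤ finrank ℝ (Lambda2₂ ξ φ) := by
  classical
  refine (finrank_sub_le_finrank_orthogonal_span {ξ, e, φ e} Finset.card_le_three).trans
    (finrank_le_finrank_of_apply_self (wedge e + wedge (φ e) ∘ₗ (-φ)) e
      (fun y hy => ?_) fun y hy => ?_)
  all_goals
    have hyξ : ⟪y, ξ⟫ = 0 := inner_left_of_mem_orthogonal (subset_span (by simp)) hy
    have hye : ⟪y, e⟫ = 0 := inner_left_of_mem_orthogonal (subset_span (by simp)) hy
    have hyφe : ⟪y, φ e⟫ = 0 := inner_left_of_mem_orthogonal (subset_span (by simp)) hy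
  · simpa only [LinearMap.add_apply, LinearMap.comp_apply, LinearMap.neg_apply, map_neg,
      ← sub_eq_add_neg] using h.wedge_sub_wedge_map_mem_lambda2₂ heξ hyξ
  · simp only [LinearMap.add_apply, LinearMap.comp_apply, LinearMap.neg_apply, map_neg,
      wedge_apply, he, hye, hyφe, h.inner_map_self, real_inner_comm y e]
    ring

theorem finrank_sub_two_le_finrank_lambda2₃ [FiniteDimensional ℝ V]
    (h : IsAlmostContactMetric ξ φ) (he : ⟪e, e⟫ = 1) (heξ : ⟪e, ξ⟫ = 0) :
    finrank ℝ V - 2 ≤ finrank ℝ (Lambda2₃ φ) := by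
  classical
  refine (finrank_sub_le_finrank_orthogonal_span {ξ, e} Finset.card_le_two).trans
    (finrank_le_finrank_of_apply_self
      (wedge e + wedge (φ e) ∘ₗ φ + (innerₗ V (φ e)).smulRight (fundForm φ)) e
      (fun y hy => ?_) fun y hy => ?_)
  all_goals
    have hyξ : ⟪y, ξ⟫ = 0 := inner_left_of_mem_orthogonal (subset_span (by simp)) hy
    have hye : ⟪y, e⟫ = 0 := inner_left_of_mem_orthogonal (subset_span (by simp)) hy
  · exact h.wedge_add_wedge_map_add_smul_fundForm_mem_lambda2₃ heξ hyξ
  · simp only [LinearMap.add_apply, LinearMap.comp_apply, LinearMap.smulRight_apply,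
      innerₗ_apply_apply, LinearMap.smul_apply, smul_eq_mul, fundForm, LinearMap.mk₂_apply,
      wedge_apply, he, hye, h.inner_map_self, real_inner_comm y e, real_inner_comm y (φ e)]
    ring

end IsAlmostContactMetric

end AlmostContactMetric

/-- The `U(2)`-decomposition `Λ² = Λ²₁ ⊕ Λ²₂ ⊕ Λ²₃ ⊕ Λ²₄`: for an almost contact metric
structure `(ξ, η, φ)` on a 5-dimensional real inner product space `V`, the 10-dimensional
space of alternating bilinear forms on `V` is the internal direct sum of the four subspaces
`Λ²₁, Λ²₂, Λ²₃, Λ²₄`, of dimensions `1, 2, 3, 4`. -/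
theorem lambda2_direct_sum_decomposition {V : Type*} [NormedAddCommGroup V]
    [InnerProductSpace ℝ V] [FiniteDimensional ℝ V] (hdim : Module.finrank ℝ V = 5)
    (ξ : V) (φ : V →ₗ[ℝ] V)
    (hξ : ⟪ξ, ξ⟫ = 1)
    (hφξ : φ ξ = 0)
    (hφ2 : ∀ X : V, φ (φ X) = -X + ⟪X, ξ⟫ • ξ)
    (hmetric : ∀ X Y : V, ⟪φ X, φ Y⟫ = ⟪X, Y⟫ - ⟪X, ξ⟫ * ⟪Y, ξ⟫) :
    Module.finrank ℝ (Lambda2 V) = 10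
      ∧ Module.finrank ℝ (Lambda2₁ φ) = 1
      ∧ Module.finrank ℝ (Lambda2₂ ξ φ) = 2
      ∧ Module.finrank ℝ (Lambda2₃ φ) = 3
      ∧ Module.finrank ℝ (Lambda2₄ ξ) = 4
      ∧ ∀ β ∈ Lambda2 V,
          ∃! q : Lambda2₁ φ × Lambda2₂ ξ φ × Lambda2₃ φ × Lambda2₄ ξ,
            β = ↑q.1 + ↑q.2.1 + ↑q.2.2.1 + ↑q.2.2.2 := by
  have h : IsAlmostContactMetric ξ φ := ⟨hξ, hφξ, hφ2, hmetric⟩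
  let b : OrthonormalBasis (Fin 5) ℝ V := (stdOrthonormalBasis ℝ V).reindex (finCongr hdim)
  have hind := h.indepFour_lambda2 b
  have hsum := finrank_add_le_of_indepFour (M := V →ₗ[ℝ] V →ₗ[ℝ] ℝ) hind h.sup_le_lambda2
  have hΛ : finrank ℝ (Lambda2 V) ≤ 10 := (finrank_lambda2_le b.toBasis).trans (by decide)
  obtain ⟨e, he, heξ⟩ := exists_inner_self_eq_one_inner_eq_zero ξ (by omega)
  have h₁ := h.finrank_lambda2₁ he heξ
  have h₂ := h.finrank_sub_three_le_finrank_lambda2₂ he heξ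
  have h₃ := h.finrank_sub_two_le_finrank_lambda2₃ he heξ
  have h₄ := finrank_sub_one_le_finrank_lambda2₄ hξ
  rw [hdim] at h₂ h₃ h₄
  exact ⟨by omega, h₁, by omega, by omega, by omega,
    existsUnique_add_of_indepFour (M := V →ₗ[ℝ] V →ₗ[ℝ] ℝ) hind h.sup_le_lambda2 (by omega)⟩
end
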